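/- There are no compact constant mean curvature surfaces Σ² in Sol³ satisfying 2f² + 2 ≤ |A|² ≤ 4f² - 2 everywhere, where f is the mean curvature and |A|² the squared norm of the second fundamental form. (Granting the Simons-type formula (1/2)Δ|A|² = |∇A|² + 4 div(⟨ξ,E₃⟩AE₃^⊤) - 4 div(f⟨ξ,E₃⟩E₃^⊤) + 2K(|A|² - 2f²) - 8⟨ξ,E₃⟩²(1-⟨ξ,E₃⟩²) and the Gauss equation K = 2⟨ξ,E₃⟩² - 1 + 2f² - (1/2)|A|², the integral argument shows such a surface would have |A|² = 4f² - 2, ⟨ξ,E₃⟩ = 0, K = 0, which contradicts ⟨AE₃,E₃⟩ = 0 forcing |A|² ≥ 4f².) -/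

import Mathlib

/-!
Move the divergence and Laplacian terms of the Simons formula to one side:
`S = ½Δ|A|² - 4 div(⟨ξ,E₃⟩AE₃^⊤) + 4 div(f⟨ξ,E₃⟩E₃^⊤)` is continuous with zero integral.
By the Gauss equation the remaining potential term is, with `a = |A|² - 2f²` and `c = ⟨ξ,E₃⟩`,
`4c²(a - 2) + a(2f² - 2 - a) + 8c⁴`, which the pinching makes `≥ 8c⁴`; so `S ≥ |∇A|² + 8c⁴ ≥ 0`.
Hence `S ≡ 0` and `c ≡ 0`, i.e. `E₃` is tangent, and then `|A|² ≥ 4f²` contradicts `|A|² ≤ 4f² - 2`.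
-/

open MeasureTheory

theorem Continuous.eq_zero_of_integral_eq_zero_of_nonneg {X : Type*} [TopologicalSpace X]
    [MeasurableSpace X] (μ : Measure X) [μ.IsOpenPosMeasure] {g : X → ℝ} (hg : Continuous g)
    (hgi : Integrable g μ) (hg_nonneg : 0 ≤ g) (hg_int : ∫ x, g x ∂μ = 0) : g = 0 :=
  (hg.ae_eq_iff_eq μ continuous_const).mp
    ((integral_eq_zero_iff_of_nonneg hg_nonneg hgi).mp hg_int)

theorem eight_mul_pow_four_le_simons_potential {f n c : ℝ} (hlow : 2 * f ^ 2 + 2 ≤ n)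
    (hup : n ≤ 4 * f ^ 2 - 2) :
    8 * c ^ 4 ≤ 2 * (2 * c ^ 2 - 1 + 2 * f ^ 2 - (1 / 2) * n) * (n - 2 * f ^ 2)
      - 8 * c ^ 2 * (1 - c ^ 2) := by
  have h_expand : 2 * (2 * c ^ 2 - 1 + 2 * f ^ 2 - (1 / 2) * n) * (n - 2 * f ^ 2)
      - 8 * c ^ 2 * (1 - c ^ 2)
      = 4 * c ^ 2 * (n - 2 * f ^ 2 - 2) + (n - 2 * f ^ 2) * (4 * f ^ 2 - 2 - n) + 8 * c ^ 4 := by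
    ring
  have h₁ : 0 ≤ 4 * c ^ 2 * (n - 2 * f ^ 2 - 2) := mul_nonneg (by positivity) (by linarith)
  have h₂ : 0 ≤ (n - 2 * f ^ 2) * (4 * f ^ 2 - 2 - n) :=
    mul_nonneg (by linarith) (by linarith)
  linarith

theorem no_compact_cmc_pinched_general
    {M : Type*} [TopologicalSpace M] [CompactSpace M] [Nonempty M]
    [MeasurableSpace M] [BorelSpace M]
    (μ : Measure M) [IsFiniteMeasure μ] [μ.IsOpenPosMeasure]
    (f : ℝ)
    (nA2 lapA2 nDA2 K c d1 d2 : M → ℝ)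
    (hlapA2 : Continuous lapA2)
    (hd1 : Continuous d1) (hd2 : Continuous d2)
    (hSimons : ∀ x, (1 / 2) * lapA2 x =
      nDA2 x + 4 * d1 x - 4 * d2 x + 2 * K x * (nA2 x - 2 * f ^ 2)
        - 8 * (c x) ^ 2 * (1 - (c x) ^ 2))
    (hGauss : ∀ x, K x = 2 * (c x) ^ 2 - 1 + 2 * f ^ 2 - (1 / 2) * nA2 x)
    (hDApos : ∀ x, 0 ≤ nDA2 x)
    (hlapInt : ∫ x, lapA2 x ∂μ = 0)
    (hd1Int : ∫ x, d1 x ∂μ = 0)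
    (hd2Int : ∫ x, d2 x ∂μ = 0)
    (htang : (∀ x, c x = 0) → ∀ x, 4 * f ^ 2 ≤ nA2 x)
    (hbound : ∀ x, 2 * f ^ 2 + 2 ≤ nA2 x ∧ nA2 x ≤ 4 * f ^ 2 - 2) :
    False := by
  have integrable {g : M → ℝ} (hg : Continuous g) : Integrable g μ :=
    hg.integrable_of_hasCompactSupport (.of_compactSpace g)
  set S : M → ℝ := fun x ↦ (1 / 2) * lapA2 x - 4 * d1 x + 4 * d2 x with hS
  have hS_cont : Continuous S := by fun_prop
  have hS_int : ∫ x, S x ∂μ = 0 := by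
    have hlapA2_int := integrable hlapA2
    have hd1_int := integrable hd1
    have hd2_int := integrable hd2
    rw [hS, integral_add (by fun_prop) (by fun_prop), integral_sub (by fun_prop) (by fun_prop),
      integral_const_mul, integral_const_mul, integral_const_mul, hlapInt, hd1Int, hd2Int]
    ring
  have hS_ge (x : M) : 8 * c x ^ 4 ≤ S x := by
    simp only [hS]
    have := eight_mul_pow_four_le_simons_potential (c := c x) (hbound x).1 (hbound x).2
    rw [← hGauss x] at this
    linarith [hSimons x, hDApos x]
  have hS_zero : S = 0 := hS_cont.eq_zero_of_integral_eq_zero_of_nonneg μ (integrable hS_cont)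
    (fun x ↦ (by positivity : 0 ≤ 8 * c x ^ 4).trans (hS_ge x)) hS_int
  have hc_zero (x : M) : c x = 0 := by
    have h := hS_ge x
    rw [hS_zero, Pi.zero_apply] at h
    exact pow_eq_zero_iff (n := 4) (by norm_num) |>.mp (le_antisymm (by linarith) (by positivity))
  obtain ⟨x₀⟩ := ‹Nonempty M›
  linarith [htang hc_zero x₀, (hbound x₀).2]

/-- there are no compact CMC surfaces Σ² in Sol³ with
2f² + 2 ≤ |A|² ≤ 4f² - 2 everywhere. The surface is modelled by a nonempty compact
space M with its Riemannian measure μ, constant mean curvature f ≠ 0, |A|² = nA2,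
Δ|A|² = lapA2, |∇A|² = nDA2, Gaussian curvature K, c = ⟨ξ,E₃⟩, and divergence terms
d1 = div(⟨ξ,E₃⟩AE₃^⊤), d2 = div(f⟨ξ,E₃⟩E₃^⊤). We grant the Simons-type formula
(1/2)Δ|A|² = |∇A|² + 4d1 - 4d2 + 2K(|A|² - 2f²) - 8c²(1 - c²), the Gauss equation
K = 2c² - 1 + 2f² - (1/2)|A|², the divergence theorem, and the fact that if E₃ is
everywhere tangent (c ≡ 0) then ⟨AE₃,E₃⟩ = 0 forces |A|² ≥ 4f². -/
theorem no_compact_cmc_pinched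
    {M : Type*} [TopologicalSpace M] [CompactSpace M] [Nonempty M]
    [MeasurableSpace M] [BorelSpace M]
    (μ : Measure M) [IsFiniteMeasure μ] [μ.IsOpenPosMeasure]
    (f : ℝ) (hf : f ≠ 0)
    (nA2 lapA2 nDA2 K c d1 d2 : M → ℝ)
    (hnA2 : Continuous nA2) (hlapA2 : Continuous lapA2) (hnDA2 : Continuous nDA2)
    (hK : Continuous K) (hc : Continuous c)
    (hd1 : Continuous d1) (hd2 : Continuous d2)
    (hSimons : ∀ x, (1 / 2) * lapA2 x =
      nDA2 x + 4 * d1 x - 4 * d2 x + 2 * K x * (nA2 x - 2 * f ^ 2)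
        - 8 * (c x) ^ 2 * (1 - (c x) ^ 2))
    (hGauss : ∀ x, K x = 2 * (c x) ^ 2 - 1 + 2 * f ^ 2 - (1 / 2) * nA2 x)
    (hDApos : ∀ x, 0 ≤ nDA2 x)
    (hlapInt : ∫ x, lapA2 x ∂μ = 0)
    (hd1Int : ∫ x, d1 x ∂μ = 0)
    (hd2Int : ∫ x, d2 x ∂μ = 0)
    (htang : (∀ x, c x = 0) → ∀ x, 4 * f ^ 2 ≤ nA2 x)
    (hbound : ∀ x, 2 * f ^ 2 + 2 ≤ nA2 x ∧ nA2 x ≤ 4 * f ^ 2 - 2) :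
    False :=
  no_compact_cmc_pinched_general μ f nA2 lapA2 nDA2 K c d1 d2 hlapA2 hd1 hd2 hSimons hGauss hDApos
    hlapInt hd1Int hd2Int htang hbound
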